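/- arXiv:1404.3293 — 3 statements merged into one kernel-verified Lean document; each statement's English description precedes it below -/
import Mathlib

section
/- (a) K(0,ω) = ξ̄^{−1} for every ω ∈ Ω. (b) If moreover, for a fixed ω ∈ Ω, the function ξ ↦ ∫_Ω k(ω',ξ,ω) d𝕡(ω') is continuous at a point ξ₀ > 0, then ξ ↦ K(ξ,ω) is differentiable at ξ₀ and −(∂/∂ξ) K(ξ,ω)|_{ξ=ξ₀} = ∫_Ω K(0,ω') k(ω',ξ₀,ω) d𝕡(ω'). (This is the identity expressing that f(ξ,ω) = K(ξ,ω) is a stationary solution of the transport equation (∂_t − ∂_ξ) f = 𝒞 f.) -/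
/-!
By symmetry, the normalization of `k` in its first argument also holds in its last one, which
gives `K(0, ω) = ξ̄⁻¹`. With `g(ξ) = ∫ k(ω', ξ, ω) d𝕡(ω')`, the tail `∫_ξ^∞ g` of the finite
integral `∫_0^∞ g` equals `∫_0^∞ g - ∫_0^ξ g` for `ξ > 0`, so the fundamental theorem of calculus
differentiates it at every continuity point of `g`. The derivative `-ξ̄⁻¹ g(ξ₀)` is the collision
term because `K(0, ·)` is the constant `ξ̄⁻¹`.
-/

noncomputable section
open MeasureTheory Topology Filter Set
open scoped ENNReal

namespace LorentzGas

/-- The integrated collision kernel K(ξ, ω) = ξ̄⁻¹ ∫_ξ^∞ ∫_Ω k(ω',ξ',ω) d𝕡(ω') dξ'. -/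
def Kker {Ω : Type*} [MeasurableSpace Ω] (p : Measure Ω) (ξbar : ℝ)
    (k : Ω → ℝ → Ω → ℝ) (ξ : ℝ) (ω : Ω) : ℝ :=
  ξbar⁻¹ * (∫⁻ ξ' in Set.Ici ξ, ∫⁻ ω', ENNReal.ofReal (k ω' ξ' ω) ∂p).toReal

section TailIntegral

variable {g : ℝ → ℝ≥0∞} {a : ℝ}

theorem toReal_setLIntegral_Ici_eq_sub (hg : Measurable g) (hfin : ∫⁻ t in Ici a, g t ≠ ∞)
    {ξ : ℝ} (hξ : a ≤ ξ) :
    (∫⁻ t in Ici ξ, g t).toReal = (∫⁻ t in Ici a, g t).toReal - ∫ t in a..ξ, (g t).toReal := by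
  have hsplit : ∫⁻ t in Ici a, g t = (∫⁻ t in Ico a ξ, g t) + ∫⁻ t in Ici ξ, g t := by
    rw [← Ico_union_Ici_eq_Ici hξ]
    exact lintegral_union measurableSet_Ici
      (disjoint_left.2 fun _ hIco hIci => (mem_Ici.1 hIci).not_gt hIco.2)
  have hIco : ∫⁻ t in Ico a ξ, g t ≠ ∞ :=
    ne_top_of_le_ne_top hfin (lintegral_mono_set Ico_subset_Ici_self)
  have hIci : ∫⁻ t in Ici ξ, g t ≠ ∞ :=
    ne_top_of_le_ne_top hfin (lintegral_mono_set (Ici_subset_Ici.2 hξ))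
  have hinterval : (∫⁻ t in Ico a ξ, g t).toReal = ∫ t in a..ξ, (g t).toReal := by
    rw [intervalIntegral.integral_of_le hξ, ← integral_Ico_eq_integral_Ioc,
      integral_toReal hg.aemeasurable (ae_lt_top hg hIco)]
  rw [hsplit, ENNReal.toReal_add hIco hIci, hinterval]
  ring

theorem hasDerivAt_toReal_setLIntegral_Ici (hg : Measurable g)
    (hfin : ∫⁻ t in Ici a, g t ≠ ∞) {ξ₀ : ℝ} (hξ₀ : a < ξ₀)
    (hcont : ContinuousAt (fun t => (g t).toReal) ξ₀) :
    HasDerivAt (fun ξ => (∫⁻ t in Ici ξ, g t).toReal) (-(g ξ₀).toReal) ξ₀ := by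
  have hint : IntervalIntegrable (fun t => (g t).toReal) volume a ξ₀ :=
    (IntegrableOn.mono_set (integrable_toReal_of_lintegral_ne_top hg.aemeasurable hfin)
      (uIcc_of_le hξ₀.le ▸ Icc_subset_Ici_self)).intervalIntegrable
  have hFTC := intervalIntegral.integral_hasDerivAt_right hint
    hg.ennreal_toReal.stronglyMeasurable.stronglyMeasurableAtFilter hcont
  refine (hFTC.const_sub (∫⁻ t in Ici a, g t).toReal).congr_of_eventuallyEq ?_
  filter_upwards [Ioi_mem_nhds hξ₀] with ξ hξ using toReal_setLIntegral_Ici_eq_sub hg hfin hξ.le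

end TailIntegral

section Kernel

variable {Ω : Type*} [MeasurableSpace Ω] {p : Measure Ω} {k : Ω → ℝ → Ω → ℝ}

theorem lintegral_Ici_lintegral_fst_eq_one (hksymm : ∀ ω' ξ ω, 0 ≤ ξ → k ω ξ ω' = k ω' ξ ω)
    (hknorm : ∀ ω', ∫⁻ ξ in Ici (0 : ℝ), ∫⁻ ω, ENNReal.ofReal (k ω' ξ ω) ∂p = 1) (ω : Ω) :
    ∫⁻ ξ in Ici (0 : ℝ), ∫⁻ ω', ENNReal.ofReal (k ω' ξ ω) ∂p = 1 := by
  rw [← hknorm ω]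
  refine setLIntegral_congr_fun measurableSet_Ici fun ξ hξ => ?_
  simp_rw [hksymm _ ξ ω hξ]

theorem Kker_zero (hksymm : ∀ ω' ξ ω, 0 ≤ ξ → k ω ξ ω' = k ω' ξ ω)
    (hknorm : ∀ ω', ∫⁻ ξ in Ici (0 : ℝ), ∫⁻ ω, ENNReal.ofReal (k ω' ξ ω) ∂p = 1)
    (ξbar : ℝ) (ω : Ω) : Kker p ξbar k 0 ω = ξbar⁻¹ := by
  simp [Kker, lintegral_Ici_lintegral_fst_eq_one hksymm hknorm ω]

end Kernel

theorem statement9_general {Ω : Type*} [MeasurableSpace Ω] (p : Measure Ω)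
    [IsProbabilityMeasure p] (ξbar : ℝ)
    (k : Ω → ℝ → Ω → ℝ)
    (hkmeas : Measurable fun q : Ω × ℝ × Ω => k q.1 q.2.1 q.2.2)
    (hknonneg : ∀ ω' ξ ω, 0 ≤ ξ → 0 ≤ k ω' ξ ω)
    (hksymm : ∀ ω' ξ ω, 0 ≤ ξ → k ω ξ ω' = k ω' ξ ω)
    (hknorm : ∀ ω', ∫⁻ ξ in Set.Ici (0 : ℝ), ∫⁻ ω, ENNReal.ofReal (k ω' ξ ω) ∂p = 1) :
    (∀ ω : Ω, Kker p ξbar k 0 ω = ξbar⁻¹) ∧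
    (∀ (ω : Ω) (ξ₀ : ℝ), 0 < ξ₀ →
      ContinuousAt (fun ξ => (∫⁻ ω', ENNReal.ofReal (k ω' ξ ω) ∂p).toReal) ξ₀ →
      HasDerivAt (fun ξ => Kker p ξbar k ξ ω)
        (-(∫ ω', Kker p ξbar k 0 ω' * k ω' ξ₀ ω ∂p)) ξ₀) := by
  refine ⟨Kker_zero hksymm hknorm ξbar, fun ω ξ₀ hξ₀ hcont => ?_⟩
  have hk_section : Measurable fun q : ℝ × Ω => k q.2 q.1 ω :=
    hkmeas.comp (measurable_snd.prodMk (measurable_fst.prodMk measurable_const))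
  have hg : Measurable fun ξ => ∫⁻ ω', ENNReal.ofReal (k ω' ξ ω) ∂p :=
    Measurable.lintegral_prod_right (f := fun ξ ω' => ENNReal.ofReal (k ω' ξ ω))
      (ENNReal.measurable_ofReal.comp hk_section)
  have hfin := (lintegral_Ici_lintegral_fst_eq_one hksymm hknorm ω).symm ▸ ENNReal.one_ne_top
  have hderiv := (hasDerivAt_toReal_setLIntegral_Ici hg hfin hξ₀ hcont).const_mul ξbar⁻¹
  refine hderiv.congr_deriv ?_
  simp_rw [Kker_zero hksymm hknorm ξbar, integral_const_mul]
  rw [integral_eq_lintegral_of_nonneg_ae (.of_forall fun ω' => hknonneg ω' ξ₀ ω hξ₀.le)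
    (hk_section.comp (measurable_const.prodMk measurable_id)).aestronglyMeasurable]
  ring

/-- (a) K(0, ω) = ξ̄⁻¹; (b) wherever ξ ↦ ∫_Ω k(ω',ξ,ω) d𝕡(ω') is
continuous, ξ ↦ K(ξ,ω) is differentiable with
−∂_ξ K(ξ,ω) = ∫_Ω K(0,ω') k(ω',ξ,ω) d𝕡(ω'); i.e. K is a stationary solution of the
transport equation (∂_t − ∂_ξ) f = 𝒞 f. -/
theorem statement9 {Ω : Type*} [MeasurableSpace Ω] (p : Measure Ω)
    [IsProbabilityMeasure p] (ξbar : ℝ) (hξbar : 0 < ξbar)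
    (k : Ω → ℝ → Ω → ℝ)
    (hkmeas : Measurable fun q : Ω × ℝ × Ω => k q.1 q.2.1 q.2.2)
    (hknonneg : ∀ ω' ξ ω, 0 ≤ ξ → 0 ≤ k ω' ξ ω)
    (hksymm : ∀ ω' ξ ω, 0 ≤ ξ → k ω ξ ω' = k ω' ξ ω)
    (hknorm : ∀ ω', ∫⁻ ξ in Set.Ici (0 : ℝ), ∫⁻ ω, ENNReal.ofReal (k ω' ξ ω) ∂p = 1) :
    (∀ ω : Ω, Kker p ξbar k 0 ω = ξbar⁻¹) ∧
    (∀ (ω : Ω) (ξ₀ : ℝ), 0 < ξ₀ →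
      ContinuousAt (fun ξ => (∫⁻ ω', ENNReal.ofReal (k ω' ξ ω) ∂p).toReal) ξ₀ →
      HasDerivAt (fun ξ => Kker p ξbar k ξ ω)
        (-(∫ ω', Kker p ξbar k 0 ω' * k ω' ξ₀ ω ∂p)) ξ₀) :=
  statement9_general p ξbar k hkmeas hknonneg hksymm hknorm

end LorentzGas
end
end

section
/- (a) ℒ is a full-rank lattice in ℝ^{d+m} (a discrete additive subgroup spanning ℝ^{d+m}). (b) π_int(ℒ) = ℤ^m; in particular π_int(ℒ) is closed and discrete in ℝ^m, so its closure 𝒜 equals ℤ^m and the connected component of 0 in 𝒜 is {0}. (c) With window 𝒲 = {e₁,…,e_m} ⊂ ℤ^m (the standard basis vectors of ℝ^m), the cut-and-project set satisfies { π(ℓ) : ℓ ∈ ℒ, π_int(ℓ) ∈ 𝒲 } = ⋃_{j=1}^m ( t_j + ℒ₀ ). -/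
/-!
The lattice ℒ is the image of ℒ₀ × ℤ^m under the shear (x, y) ↦ (x + ∑ⱼ yⱼ tⱼ, y), a linear
automorphism of ℝ^d × ℝ^m that does not move the internal coordinate. Discreteness and spanning
therefore pass from ℒ₀ × ℤ^m to ℒ, the internal projection of ℒ is ℤ^m, and the points of ℒ lying
over eⱼ ∈ ℤ^m are exactly (tⱼ + ℒ₀) × {eⱼ}.
-/

noncomputable section
open MeasureTheory Topology Filter Set

namespace LorentzGas

/-- A full-rank lattice in a real topological vector space: a discrete additive
subgroup which spans the whole space. -/
def IsFullLatticeIn {V : Type*} [AddCommGroup V] [Module ℝ V] [TopologicalSpace V]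
    (L : AddSubgroup V) : Prop :=
  DiscreteTopology L ∧ Submodule.span ℝ (L : Set V) = ⊤

/-- The subgroup ℒ ⊂ ℝ^d × ℝ^m generated by ℒ₀ × {0} and (t_j, e_j), j = 1, …, m:
ℒ = { (x + n₁t₁ + ⋯ + n_mt_m, (n₁,…,n_m)) : x ∈ ℒ₀, n ∈ ℤ^m }. -/
def periodicCPLattice {d m : ℕ} (L0 : AddSubgroup (Fin d → ℝ)) (t : Fin m → Fin d → ℝ) :
    Set ((Fin d → ℝ) × (Fin m → ℝ)) :=
  {p | ∃ x ∈ L0, ∃ c : Fin m → ℤ,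
    p = (x + ∑ j, (c j : ℝ) • t j, fun j => (c j : ℝ))}

section ShearLattice

variable {R E F : Type*} [CommRing R]
  [AddCommGroup E] [Module R E] [TopologicalSpace E] [IsTopologicalAddGroup E]
  [AddCommGroup F] [Module R F] [TopologicalSpace F]

def unshear (T : F →L[R] E) : E × F →L[R] E × F :=
  (ContinuousLinearMap.fst R E F - T ∘L ContinuousLinearMap.snd R E F).prod
    (ContinuousLinearMap.snd R E F)

@[simp]
lemma unshear_apply (T : F →L[R] E) (p : E × F) : unshear T p = (p.1 - T p.2, p.2) := rfl

lemma unshear_injective (T : F →L[R] E) : Function.Injective (unshear T) := by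
  rintro ⟨x, y⟩ ⟨x', y'⟩ h
  simp only [unshear_apply, Prod.mk.injEq] at h
  obtain ⟨hx, rfl⟩ := h
  simpa using hx

lemma unshear_surjective (T : F →L[R] E) : Function.Surjective (unshear T) :=
  fun p => ⟨(p.1 + T p.2, p.2), by simp⟩

/-- The image of `L0 × Z` under the shear `(x, y) ↦ (x + T y, y)`. -/
def shearLattice (L0 : AddSubgroup E) (Z : AddSubgroup F) (T : F →L[R] E) :
    AddSubgroup (E × F) :=
  (L0.prod Z).comap (unshear T).toLinearMap.toAddMonoidHom

variable {L0 : AddSubgroup E} {Z : AddSubgroup F} {T : F →L[R] E}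

lemma mem_shearLattice {p : E × F} :
    p ∈ shearLattice L0 Z T ↔ p.1 - T p.2 ∈ L0 ∧ p.2 ∈ Z := Iff.rfl

lemma discreteTopology_shearLattice [DiscreteTopology L0] [DiscreteTopology Z] :
    DiscreteTopology (shearLattice L0 Z T) := by
  have : DiscreteTopology ((L0 : Set E) ×ˢ (Z : Set F)) :=
    (Homeomorph.Set.prod (L0 : Set E) (Z : Set F)).symm.discreteTopology
  exact .preimage_of_continuous_injective ((L0 : Set E) ×ˢ (Z : Set F)) (unshear T).continuous
    (unshear_injective T)

lemma span_shearLattice (hL0 : Submodule.span R (L0 : Set E) = ⊤)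
    (hZ : Submodule.span R (Z : Set F) = ⊤) :
    Submodule.span R (shearLattice L0 Z T : Set (E × F)) = ⊤ := by
  have hrange : (L0 : Set E) ×ˢ (Z : Set F) ⊆ LinearMap.range (unshear T).toLinearMap := by
    rw [LinearMap.range_eq_top.mpr (unshear_surjective T)]
    exact Set.subset_univ _
  have hne : ((L0 : Set E) ×ˢ (Z : Set F)).Nonempty := ⟨(0, 0), L0.zero_mem, Z.zero_mem⟩
  have h := Submodule.span_preimage_eq hne hrange
  rwa [Submodule.span_prod_eq R L0.zero_mem Z.zero_mem, hL0, hZ, Submodule.prod_top,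
    Submodule.comap_top] at h

lemma snd_image_shearLattice : Prod.snd '' (shearLattice L0 Z T : Set (E × F)) = Z := by
  refine Set.Subset.antisymm (Set.image_subset_iff.mpr fun p hp => (mem_shearLattice.mp hp).2)
    fun z hz => ⟨(T z, z), mem_shearLattice.mpr ⟨by simp [L0.zero_mem], hz⟩, rfl⟩

lemma fst_image_shearLattice_inter_snd_preimage_range {ι : Type*} {w : ι → F}
    (hw : ∀ i, w i ∈ Z) :
    Prod.fst '' (shearLattice L0 Z T ∩ Prod.snd ⁻¹' Set.range w : Set (E × F)) =
      ⋃ i, (fun v => T (w i) + v) '' (L0 : Set E) := by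
  ext x
  simp only [Set.mem_image, Set.mem_inter_iff, Set.mem_preimage, Set.mem_range, Set.mem_iUnion,
    SetLike.mem_coe, mem_shearLattice]
  constructor
  · rintro ⟨p, ⟨⟨hp, -⟩, i, hi⟩, rfl⟩
    exact ⟨i, p.1 - T p.2, hp, by rw [hi]; abel⟩
  · rintro ⟨i, v, hv, rfl⟩
    exact ⟨(T (w i) + v, w i), ⟨⟨by simpa using hv, hw i⟩, i, rfl⟩, rfl⟩

end ShearLattice

section IntLattice

variable (ι : Type*)

def intLattice : AddSubgroup (ι → ℝ) :=
  (AddMonoidHom.compLeft (Int.castAddHom ℝ) ι).range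

lemma coe_intLattice :
    (intLattice ι : Set (ι → ℝ)) = Set.range fun c : ι → ℤ => fun j => (c j : ℝ) := rfl

variable {ι} in
lemma mem_intLattice {y : ι → ℝ} :
    y ∈ intLattice ι ↔ ∃ c : ι → ℤ, (fun j => (c j : ℝ)) = y := Iff.rfl

lemma isClosedEmbedding_intCast_pi :
    IsClosedEmbedding fun c : ι → ℤ => fun j => (c j : ℝ) :=
  IsClosedEmbedding.piMap fun _ => Int.isClosedEmbedding_coe_real

lemma isClosed_intLattice : IsClosed (intLattice ι : Set (ι → ℝ)) :=
  (isClosedEmbedding_intCast_pi ι).isClosed_range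

instance [Finite ι] : DiscreteTopology (intLattice ι) :=
  (isClosedEmbedding_intCast_pi ι).isEmbedding.toHomeomorph.discreteTopology

lemma single_one_mem_intLattice [DecidableEq ι] (j : ι) : Pi.single j (1 : ℝ) ∈ intLattice ι :=
  ⟨Pi.single j 1, by ext; simp [Pi.single_apply]⟩

lemma span_intLattice [Finite ι] : Submodule.span ℝ (intLattice ι : Set (ι → ℝ)) = ⊤ := by
  classical
  refine eq_top_iff.mpr ((Pi.basisFun ℝ ι).span_eq.ge.trans (Submodule.span_mono ?_))
  rintro _ ⟨j, rfl⟩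
  simpa using single_one_mem_intLattice ι j

end IntLattice

lemma connectedComponentIn_eq_singleton {α : Type*} [TopologicalSpace α] {F : Set α}
    [DiscreteTopology F] {x : α} (hx : x ∈ F) : connectedComponentIn F x = {x} := by
  rw [connectedComponentIn_eq_image hx, connectedComponent_eq_singleton, Set.image_singleton]

lemma periodicCPLattice_eq_shearLattice {d m : ℕ} (L0 : AddSubgroup (Fin d → ℝ))
    (t : Fin m → Fin d → ℝ) :
    periodicCPLattice L0 t = shearLattice L0 (intLattice (Fin m))
      (LinearMap.toContinuousLinearMap (Fintype.linearCombination ℝ t)) := by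
  ext ⟨x, y⟩
  simp only [periodicCPLattice, Set.mem_ofPred_eq, SetLike.mem_coe, mem_shearLattice,
    mem_intLattice, LinearMap.coe_toContinuousLinearMap', Fintype.linearCombination_apply,
    Prod.mk.injEq]
  constructor
  · rintro ⟨v, hv, c, rfl, rfl⟩
    exact ⟨by simpa using hv, c, rfl⟩
  · rintro ⟨hx, c, rfl⟩
    exact ⟨_, hx, c, by simp, rfl⟩

theorem statement13_general (d m : ℕ)
    (L0 : AddSubgroup (Fin d → ℝ)) (hL0 : IsFullLatticeIn L0)
    (t : Fin m → Fin d → ℝ) :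
    -- (a)
    (∃ L : AddSubgroup ((Fin d → ℝ) × (Fin m → ℝ)),
      (L : Set ((Fin d → ℝ) × (Fin m → ℝ))) = periodicCPLattice L0 t ∧
        DiscreteTopology L ∧ Submodule.span ℝ (periodicCPLattice L0 t) = ⊤) ∧
    -- (b)
    (Prod.snd '' periodicCPLattice L0 t
        = Set.range (fun c : Fin m → ℤ => fun j => (c j : ℝ)) ∧
      IsClosed (Prod.snd '' periodicCPLattice L0 t) ∧
      DiscreteTopology (Prod.snd '' periodicCPLattice L0 t) ∧
      closure (Prod.snd '' periodicCPLattice L0 t) = Prod.snd '' periodicCPLattice L0 t ∧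
      connectedComponentIn (closure (Prod.snd '' periodicCPLattice L0 t)) 0 = {0}) ∧
    -- (c)
    (Prod.fst '' (periodicCPLattice L0 t ∩
        Prod.snd ⁻¹' (Set.range fun j : Fin m => (Pi.single j (1 : ℝ) : Fin m → ℝ)))
      = ⋃ j, (fun v => t j + v) '' (L0 : Set (Fin d → ℝ))) := by
  have : DiscreteTopology L0 := hL0.1
  have : DiscreteTopology (intLattice (Fin m) : Set (Fin m → ℝ)) :=
    inferInstanceAs (DiscreteTopology (intLattice (Fin m)))
  rw [periodicCPLattice_eq_shearLattice, snd_image_shearLattice, ← coe_intLattice,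
    (isClosed_intLattice _).closure_eq,
    fst_image_shearLattice_inter_snd_preimage_range (single_one_mem_intLattice _)]
  refine ⟨⟨_, rfl, discreteTopology_shearLattice, span_shearLattice hL0.2 (span_intLattice _)⟩,
    ⟨rfl, isClosed_intLattice _, this, rfl,
      connectedComponentIn_eq_singleton (intLattice _).zero_mem⟩, ?_⟩
  simp

/-- (a) ℒ is a full-rank lattice in ℝ^{d+m}; (b) π_int(ℒ) = ℤ^m,
which is closed and discrete, has closure ℤ^m, and {0} as connected component of 0;
(c) the cut-and-project set with window {e₁, …, e_m} is ⋃_j (t_j + ℒ₀). -/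
theorem statement13 (d m : ℕ) (hd : 1 ≤ d) (hm : 1 ≤ m)
    (L0 : AddSubgroup (Fin d → ℝ)) (hL0 : IsFullLatticeIn L0)
    (t : Fin m → Fin d → ℝ)
    (hdisj : ∀ j j' : Fin m, j ≠ j' →
      Disjoint ((fun v => t j + v) '' (L0 : Set (Fin d → ℝ)))
        ((fun v => t j' + v) '' (L0 : Set (Fin d → ℝ)))) :
    -- (a)
    (∃ L : AddSubgroup ((Fin d → ℝ) × (Fin m → ℝ)),
      (L : Set ((Fin d → ℝ) × (Fin m → ℝ))) = periodicCPLattice L0 t ∧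
        DiscreteTopology L ∧ Submodule.span ℝ (periodicCPLattice L0 t) = ⊤) ∧
    -- (b)
    (Prod.snd '' periodicCPLattice L0 t
        = Set.range (fun c : Fin m → ℤ => fun j => (c j : ℝ)) ∧
      IsClosed (Prod.snd '' periodicCPLattice L0 t) ∧
      DiscreteTopology (Prod.snd '' periodicCPLattice L0 t) ∧
      closure (Prod.snd '' periodicCPLattice L0 t) = Prod.snd '' periodicCPLattice L0 t ∧
      connectedComponentIn (closure (Prod.snd '' periodicCPLattice L0 t)) 0 = {0}) ∧
    -- (c)
    (Prod.fst '' (periodicCPLattice L0 t ∩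
        Prod.snd ⁻¹' (Set.range fun j : Fin m => (Pi.single j (1 : ℝ) : Fin m → ℝ)))
      = ⋃ j, (fun v => t j + v) '' (L0 : Set (Fin d → ℝ))) :=
  statement13_general d m L0 hL0 t

end LorentzGas
end
end

section
/- For every h ∈ H one has π_int( δ^{1/n} ℤ^n h g ) ⊆ 𝒜, where δ^{1/n} ℤ^n h g = { δ^{1/n} x h g : x ∈ ℤ^n }. -/
noncomputable section
open MeasureTheory Matrix Topology Filter Set
open scoped Classical

namespace LorentzGas

/-- Euclidean space ℝ^k (row vectors). -/
abbrev E (k : ℕ) : Type := EuclideanSpace ℝ (Fin k)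

/-- The open unit ball in ℝ^k. -/
def ballB (k : ℕ) : Set (E k) := Metric.ball 0 1

/-- The vector (0, w) ∈ ℝ^d obtained from w ∈ ℝ^{d-1}. -/
def pad {d : ℕ} (w : Fin (d - 1) → ℝ) : Fin d → ℝ :=
  fun i => if h : i.val = 0 then 0 else w ⟨i.val - 1, by have := i.isLt; omega⟩

/-- The first standard basis vector e₁ ∈ ℝ^d. -/
def e1 (d : ℕ) : Fin d → ℝ := fun i => if i.val = 0 then 1 else 0

/-- ŵ = w / ‖w‖ (with the junk value `e₁` at w = 0). -/
def hatw {k : ℕ} (w : E k) : Fin k → ℝ :=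
  if w = 0 then (fun j => if j.val = 0 then 1 else 0) else fun j => ‖w‖⁻¹ * w j

/-- The infinitesimal generator of the scattering matrix: first row (0, -t·u),
first column (0, t·u)ᵀ, remaining block zero. -/
def sGen {d : ℕ} (t : ℝ) (u : Fin (d - 1) → ℝ) : Matrix (Fin d) (Fin d) ℝ :=
  Matrix.of fun i j =>
    if hi : i.val = 0 then
      (if hj : j.val = 0 then 0 else -t * u ⟨j.val - 1, by have := j.isLt; omega⟩)
    else if hj : j.val = 0 then t * u ⟨i.val - 1, by have := i.isLt; omega⟩
    else 0

/-- The scattering matrix S(w) = exp(sGen θ(‖w‖) ŵ). -/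
def Smat {d : ℕ} (θ : ℝ → ℝ) (w : E (d - 1)) : Matrix (Fin d) (Fin d) ℝ :=
  NormedSpace.exp (sGen (θ ‖w‖) (hatw w))

/-- The matrix D(r) = diag(r^{d-1}, r⁻¹, …, r⁻¹). -/
def Dmat (d : ℕ) (r : ℝ) : Matrix (Fin d) (Fin d) ℝ :=
  Matrix.diagonal fun i => if i.val = 0 then r ^ (d - 1) else r⁻¹

/-- Hypotheses (A) or (B) on the scattering angle θ ∈ C¹([0,1)). -/
def ScatteringHyp (θ : ℝ → ℝ) : Prop :=
  ContDiffOn ℝ 1 θ (Set.Ico 0 1) ∧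
    ((StrictAntiOn θ (Set.Ico 0 1) ∧ θ 0 = Real.pi ∧ ∀ x ∈ Set.Ico (0 : ℝ) 1, 0 < θ x) ∨
     (StrictMonoOn θ (Set.Ico 0 1) ∧ θ 0 = -Real.pi ∧ ∀ x ∈ Set.Ico (0 : ℝ) 1, θ x < 0))

/-- G = SL(d, ℝ). -/
abbrev SL (d : ℕ) : Type := Matrix.SpecialLinearGroup (Fin d) ℝ

instance (d : ℕ) : TopologicalSpace (SL d) :=
  inferInstanceAs (TopologicalSpace { A : Matrix (Fin d) (Fin d) ℝ // A.det = 1 })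

/-- Γ = SL(d, ℤ), viewed as a subgroup of SL(d, ℝ). -/
def Gamma (d : ℕ) : Subgroup (SL d) :=
  (Matrix.SpecialLinearGroup.map (n := Fin d) (Int.castRingHom ℝ)).range

/-- The setoid of right cosets Γg. -/
instance lorentzSetoid (d : ℕ) : Setoid (SL d) := QuotientGroup.rightRel (Gamma d)

/-- X = Γ\G, the space of right cosets Γg, g ∈ SL(d,ℝ), with the quotient topology. -/
def X (d : ℕ) : Type := Quotient (lorentzSetoid d)

instance (d : ℕ) : TopologicalSpace (X d) := inferInstanceAs (TopologicalSpace (Quotient _))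
instance (d : ℕ) : MeasurableSpace (X d) := borel _
instance (d : ℕ) : BorelSpace (X d) := ⟨rfl⟩

/-- The coset Γ A of a matrix A with det A = 1 (junk value Γ·1 otherwise). -/
def toX {d : ℕ} (A : Matrix (Fin d) (Fin d) ℝ) : X d :=
  if h : A.det = 1 then ⟦(⟨A, h⟩ : SL d)⟧ else ⟦1⟧

/-- Right multiplication by g on X = Γ\G. -/
def mulRightX {d : ℕ} (g : SL d) : X d → X d :=
  Quotient.map (fun x => x * g) (by
    intro a b hab
    have h : b * a⁻¹ ∈ Gamma d := QuotientGroup.rightRel_apply.mp hab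
    refine QuotientGroup.rightRel_apply.mpr ?_
    simpa [mul_assoc] using h)

end LorentzGas

namespace LorentzGas

/-- The right-coset space H\G of a subgroup H of a group G. -/
def cosetSpace {G : Type*} [Group G] (H : Subgroup G) : Type _ :=
  Quotient (QuotientGroup.rightRel H)

instance {G : Type*} [Group G] [TopologicalSpace G] (H : Subgroup G) :
    TopologicalSpace (cosetSpace H) := inferInstanceAs (TopologicalSpace (Quotient _))

instance {G : Type*} [Group G] [TopologicalSpace G] (H : Subgroup G) :
    MeasurableSpace (cosetSpace H) := borel _

/-- The right coset Hg in the right-coset space H\G. -/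
def coset {G : Type*} [Group G] (H : Subgroup G) (g : G) : cosetSpace H :=
  Quotient.mk (QuotientGroup.rightRel H) g

/-- Right multiplication by g on a right-coset space H\G. -/
def rmul {G : Type*} [Group G] (H : Subgroup G) (g : G) : cosetSpace H → cosetSpace H :=
  Quotient.lift (fun x => coset H (x * g)) (by
    intro a b hab
    have h : b * a⁻¹ ∈ H := QuotientGroup.rightRel_apply.mp hab
    exact Quot.sound (QuotientGroup.rightRel_apply.mpr (by simpa [mul_assoc] using h)))

/-- The coset space H'\H carries a right-H-invariant Borel probability measure. -/
def LatticeCondition {G : Type*} [Group G] [TopologicalSpace G] (H : Subgroup G) : Prop :=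
  ∃ ν : Measure (cosetSpace H),
    IsProbabilityMeasure ν ∧ ∀ g : G, Measure.map (rmul H g) ν = ν

/-- The block-diagonal embedding A ↦ diag(A, 1_m) of d×d matrices into (d+m)×(d+m)
matrices. -/
def embedMat (d m : ℕ) (A : Matrix (Fin d) (Fin d) ℝ) :
    Matrix (Fin (d + m)) (Fin (d + m)) ℝ :=
  Matrix.reindex finSumFinEquiv finSumFinEquiv
    (Matrix.fromBlocks A 0 0 (1 : Matrix (Fin m) (Fin m) ℝ))

lemma embedMat_det (d m : ℕ) (A : Matrix (Fin d) (Fin d) ℝ) :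
    (embedMat d m A).det = A.det := by
  simp [embedMat, Matrix.det_fromBlocks_zero₂₁]

/-- diag(A, 1_m) as an element of SL(d+m, ℝ). -/
def embedSL {d m : ℕ} (A : SL d) : SL (d + m) :=
  ⟨embedMat d m (A : Matrix (Fin d) (Fin d) ℝ), by rw [embedMat_det]; exact A.2⟩

/-- The embedding φ_g : SL(d,ℝ) → SL(n,ℝ), A ↦ g diag(A, 1_m) g⁻¹. -/
def phiSL {d m : ℕ} (g : SL (d + m)) (A : SL d) : SL (d + m) :=
  g * embedSL A * g⁻¹

/-- The projection ℝ^{d+m} → ℝ^d onto the first d coordinates (physical space). -/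
def projPhys (d m : ℕ) (x : Fin (d + m) → ℝ) : Fin d → ℝ :=
  fun i => x (Fin.castAdd m i)

/-- The projection ℝ^{d+m} → ℝ^m onto the last m coordinates (internal space). -/
def projInt (d m : ℕ) (x : Fin (d + m) → ℝ) : Fin m → ℝ :=
  fun j => x (Fin.natAdd d j)

/-- The lattice δ^{1/n} ℤ^n g ⊂ ℝ^n (row vectors). -/
def scaledLattice (d m : ℕ) (δ : ℝ) (A : Matrix (Fin (d + m)) (Fin (d + m)) ℝ) :
    Set (Fin (d + m) → ℝ) :=
  Set.range fun x : Fin (d + m) → ℤ =>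
    (δ ^ (((d + m : ℕ) : ℝ))⁻¹) • ((fun i => (x i : ℝ)) ᵥ* A)

/-!
Since `h ∈ H`, hypothesis (iii) puts the coset `Γh` in the closure of `Γ φ_g(SL(d,ℝ))`; the
quotient map `SL(n,ℝ) → Γ\SL(n,ℝ)` is open, so `h` itself is a limit of products `γ φ_g(A)`
with `γ ∈ Γ`. For these, `x γ φ_g(A) g = (x γ) g diag(A, 1_m)`, and right multiplication by
`diag(A, 1_m)` does not move the internal coordinates, so the internal projection is that of
the point `δ^{1/n} (x γ) g` of `ℒ`. Continuity of `y ↦ π_int(δ^{1/n} x y g)` finishes the proof.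
-/

open Pointwise

-- `SL n` carries its own (definitionally equal) copy of Mathlib's topology, so instances
-- about Mathlib's do not fire on it.
instance (n : ℕ) : IsTopologicalGroup (SL n) := Matrix.SpecialLinearGroup.topologicalGroup

theorem mem_closure_mul_of_mk_mem_closure_image {G : Type*} [Group G] [TopologicalSpace G]
    [ContinuousConstSMul G G] (Γ : Subgroup G) {S : Set G} {h : G}
    (hh : Quotient.mk (QuotientGroup.rightRel Γ) h ∈
      closure (Quotient.mk (QuotientGroup.rightRel Γ) '' S)) :
    h ∈ closure ((Γ : Set G) * S) := by
  have hpre : Quotient.mk (QuotientGroup.rightRel Γ) ⁻¹'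
      (Quotient.mk (QuotientGroup.rightRel Γ) '' S) = (Γ : Set G) * S := by
    ext y
    simp only [Set.mem_preimage, Set.mem_image, Set.mem_mul, SetLike.mem_coe]
    constructor
    · rintro ⟨s, hs, hsy⟩
      exact ⟨y * s⁻¹, QuotientGroup.rightRel_apply.mp (Quotient.exact hsy), s, hs, by group⟩
    · rintro ⟨γ, hγ, s, hs, rfl⟩
      refine ⟨s, hs, Quotient.sound (QuotientGroup.rightRel_apply.mpr ?_)⟩
      simpa using hγ
  have : ContinuousConstSMul Γ G := ⟨fun γ => continuous_const_smul (γ : G)⟩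
  rw [← hpre]
  exact (isOpenMap_quotient_mk'_mul (Γ := Γ)).preimage_closure_subset_closure_preimage hh

theorem projInt_vecMul_embedMat (d m : ℕ) (A : Matrix (Fin d) (Fin d) ℝ)
    (v : Fin (d + m) → ℝ) :
    projInt d m (v ᵥ* embedMat d m A) = projInt d m v := by
  funext j
  simp only [projInt, embedMat, Matrix.vecMul, dotProduct, Matrix.reindex_apply,
    Matrix.submatrix_apply, Fin.sum_univ_add]
  simp [Matrix.one_apply]

theorem phiSL_mul_self {d m : ℕ} (g : SL (d + m)) (A : SL d) :
    phiSL g A * g = g * embedSL A := by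
  simp [phiSL, mul_assoc]

theorem smul_vecMul_mem_scaledLattice (d m : ℕ) (δ : ℝ)
    (M : Matrix (Fin (d + m)) (Fin (d + m)) ℝ) (x : Fin (d + m) → ℤ)
    {γ : SL (d + m)} (hγ : γ ∈ Gamma (d + m)) :
    (δ ^ (((d + m : ℕ) : ℝ))⁻¹) • ((fun i => (x i : ℝ)) ᵥ* ((γ : Matrix _ _ ℝ) * M)) ∈
      scaledLattice d m δ M := by
  obtain ⟨B, rfl⟩ := hγ
  refine ⟨x ᵥ* (B : Matrix (Fin (d + m)) (Fin (d + m)) ℤ), ?_⟩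
  have hcast : (fun i => ((x ᵥ* (B : Matrix _ _ ℤ)) i : ℝ)) =
      (fun i => (x i : ℝ)) ᵥ*
        ((Matrix.SpecialLinearGroup.map (Int.castRingHom ℝ) B : SL (d + m)) :
          Matrix (Fin (d + m)) (Fin (d + m)) ℝ) := by
    funext i
    exact RingHom.map_vecMul (Int.castRingHom ℝ) _ x i
  simp only [hcast, Matrix.vecMul_vecMul]

theorem projInt_smul_vecMul_mul_phiSL_mul {d m : ℕ} (g y : SL (d + m)) (A : SL d) (c : ℝ)
    (v : Fin (d + m) → ℝ) :
    projInt d m (c • (v ᵥ*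
        (((y * phiSL g A : SL (d + m)) : Matrix (Fin (d + m)) (Fin (d + m)) ℝ) *
          (g : Matrix (Fin (d + m)) (Fin (d + m)) ℝ)))) =
      projInt d m (c • (v ᵥ* ((y : Matrix (Fin (d + m)) (Fin (d + m)) ℝ) *
        (g : Matrix (Fin (d + m)) (Fin (d + m)) ℝ)))) := by
  have hmat : ((y * phiSL g A : SL (d + m)) : Matrix (Fin (d + m)) (Fin (d + m)) ℝ) * g =
      (y : Matrix (Fin (d + m)) (Fin (d + m)) ℝ) * g *
        embedMat d m (A : Matrix (Fin d) (Fin d) ℝ) := by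
    rw [← Matrix.SpecialLinearGroup.coe_mul, mul_assoc, phiSL_mul_self, ← mul_assoc]
    rfl
  rw [hmat, ← Matrix.vecMul_vecMul, ← Matrix.smul_vecMul, projInt_vecMul_embedMat]

theorem statement17_general (d m : ℕ)
    (δ : ℝ) (g : SL (d + m))
    (H : Subgroup (SL (d + m)))
    (hHclosure : closure (Set.range fun A : SL d => (⟦phiSL g A⟧ : X (d + m)))
      = Set.range (fun h : H => (⟦(h : SL (d + m))⟧ : X (d + m)))) :
    ∀ h : SL (d + m), h ∈ H → ∀ x : Fin (d + m) → ℤ,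
      projInt d m ((δ ^ (((d + m : ℕ) : ℝ))⁻¹) •
          ((fun i => (x i : ℝ)) ᵥ*
            ((h : Matrix (Fin (d + m)) (Fin (d + m)) ℝ) *
              (g : Matrix (Fin (d + m)) (Fin (d + m)) ℝ))))
        ∈ closure (projInt d m ''
            scaledLattice d m δ (g : Matrix (Fin (d + m)) (Fin (d + m)) ℝ)) := by
  intro h hH x
  have hclosure : h ∈ closure ((Gamma (d + m) : Set (SL (d + m))) * Set.range (phiSL g)) := by
    refine mem_closure_mul_of_mk_mem_closure_image _ ?_
    rw [← Set.range_comp]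
    exact hHclosure ▸ ⟨⟨h, hH⟩, rfl⟩
  let f : SL (d + m) → Fin m → ℝ := fun y => projInt d m ((δ ^ (((d + m : ℕ) : ℝ))⁻¹) •
      ((fun i => (x i : ℝ)) ᵥ* ((y : Matrix (Fin (d + m)) (Fin (d + m)) ℝ) *
        (g : Matrix (Fin (d + m)) (Fin (d + m)) ℝ))))
  have hf : Continuous f := by
    unfold f projInt
    fun_prop
  refine map_mem_closure (f := f) hf hclosure ?_
  rintro _ ⟨γ, hγ, _, ⟨A, rfl⟩, rfl⟩
  exact ⟨_, smul_vecMul_mem_scaledLattice d m δ g x hγ,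
    (projInt_smul_vecMul_mul_phiSL_mul g γ A _ _).symm⟩

/-- for every h in the Ratner subgroup H one has
π_int(δ^{1/n} ℤ^n h g) ⊆ 𝒜 = closure of π_int(ℒ), where ℒ = δ^{1/n} ℤ^n g. -/
theorem statement17 (d m : ℕ) (hd : 2 ≤ d) (hm : 1 ≤ m)
    (δ : ℝ) (hδ : 0 < δ) (g : SL (d + m))
    (H : Subgroup (SL (d + m)))
    (hHclosed : IsClosed (H : Set (SL (d + m))))
    (hHconn : IsConnected (H : Set (SL (d + m))))
    (hHlat : LatticeCondition ((Gamma (d + m)).subgroupOf H))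
    (hHphi : ∀ A : SL d, phiSL g A ∈ H)
    (hHclosure : closure (Set.range fun A : SL d => (⟦phiSL g A⟧ : X (d + m)))
      = Set.range (fun h : H => (⟦(h : SL (d + m))⟧ : X (d + m)))) :
    ∀ h : SL (d + m), h ∈ H → ∀ x : Fin (d + m) → ℤ,
      projInt d m ((δ ^ (((d + m : ℕ) : ℝ))⁻¹) •
          ((fun i => (x i : ℝ)) ᵥ*
            ((h : Matrix (Fin (d + m)) (Fin (d + m)) ℝ) *
              (g : Matrix (Fin (d + m)) (Fin (d + m)) ℝ))))
        ∈ closure (projInt d m ''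
            scaledLattice d m δ (g : Matrix (Fin (d + m)) (Fin (d + m)) ℝ)) :=
  statement17_general d m δ g H hHclosure

end LorentzGas
end
end
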